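/- For any artin algebra Λ, the dimension of the subcategory Λ-mod inside the bounded derived category satisfies tri.dim_{D^b(Λ-mod)} (Λ-mod) ≤ ext.dim Λ. -/

import Mathlib

universe u v w

open CategoryTheory

namespace Paper

/-! ## Module-theoretic notions -/

section Modules

variable (Λ : Type u) [Ring Λ]

/-- `M` belongs to `add V`: `M` is a direct summand of a finite direct sum of copies of `V`. -/
def MemAdd (V M : ModuleCat.{u} Λ) : Prop :=
  ∃ (n : ℕ) (s : M →ₗ[Λ] (Fin n → V)) (r : (Fin n → V) →ₗ[Λ] M),
    r.comp s = LinearMap.id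

/-- `f : P → M` is a projective cover: `P` is projective, `f` is surjective and
`ker f` is a superfluous submodule of `P`. -/
def IsProjectiveCover {P M : ModuleCat.{u} Λ} (f : P →ₗ[Λ] M) : Prop :=
  Module.Projective Λ P ∧ Function.Surjective f ∧
    ∀ N : Submodule Λ P, N ⊔ LinearMap.ker f = ⊤ → N = ⊤

/-- `S` is (a model of) the syzygy `Ω(M)`: the kernel of a projective cover of `M`. -/
def IsSyzygy (M S : ModuleCat.{u} Λ) : Prop :=
  ∃ (P : ModuleCat.{u} Λ) (f : P →ₗ[Λ] M), IsProjectiveCover Λ f ∧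
    Nonempty (S ≃ₗ[Λ] LinearMap.ker f)

/-- `S` is (a model of) the `n`-th syzygy `Ωⁿ(M)`. -/
def IsNthSyzygy : ℕ → ModuleCat.{u} Λ → ModuleCat.{u} Λ → Prop
  | 0, M, S => Nonempty (S ≃ₗ[Λ] M)
  | n + 1, M, S => ∃ T : ModuleCat.{u} Λ, IsSyzygy Λ M T ∧ IsNthSyzygy n T S

/-- There is an exact sequence `0 → V_m → ⋯ → V_1 → V_0 → S → 0` with all `V_i ∈ add V`. -/
def HasAddResolution (V : ModuleCat.{u} Λ) : ℕ → ModuleCat.{u} Λ → Prop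
  | 0, S => MemAdd Λ V S
  | m + 1, S => ∃ (W : ModuleCat.{u} Λ) (f : W →ₗ[Λ] S),
      MemAdd Λ V W ∧ Function.Surjective f ∧
      HasAddResolution V m (ModuleCat.of Λ ↥(LinearMap.ker f))

/-- `Λ` is an `(m,n)`-Igusa-Todorov algebra: there is a finitely generated module `V` such
that, for every finitely generated module `M`, the `n`-th syzygy `Ωⁿ(M)` admits an exact
sequence `0 → V_m → ⋯ → V_0 → Ωⁿ(M) → 0` with all `V_i ∈ add V`. -/
def IsIgusaTodorov (m n : ℕ) : Prop :=
  ∃ V : ModuleCat.{u} Λ, Module.Finite Λ V ∧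
    ∀ M : ModuleCat.{u} Λ, Module.Finite Λ M →
      ∀ S : ModuleCat.{u} Λ, IsNthSyzygy Λ n M S → HasAddResolution Λ V m S

/-- Membership in `[T]_{n+1}`, where `[T]_1 = add T` and `[T]_{k+1} = [T]_1 • [T]_k`:
`M ∈ [T]_{n+2}` iff `M` is a direct summand of an extension of a module in `[T]_{n+1}`
by a module in `add T`. -/
def MemBracket (T : ModuleCat.{u} Λ) : ℕ → ModuleCat.{u} Λ → Prop
  | 0, M => MemAdd Λ T M
  | n + 1, M => ∃ (U E V : ModuleCat.{u} Λ) (f : U →ₗ[Λ] E) (g : E →ₗ[Λ] V),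
      Function.Injective f ∧ Function.Surjective g ∧
      LinearMap.range f = LinearMap.ker g ∧
      MemAdd Λ T U ∧ MemBracket T n V ∧
      ∃ (s : M →ₗ[Λ] E) (r : E →ₗ[Λ] M), r.comp s = LinearMap.id

/-- The extension dimension of `Λ`-mod : the least `n` such that
`Λ-mod = [T]_{n+1}` for some finitely generated `T`. -/
noncomputable def extDim : ℕ∞ :=
  sInf {c : ℕ∞ | ∃ (n : ℕ) (T : ModuleCat.{u} Λ), c = n ∧ Module.Finite Λ T ∧
    ∀ M : ModuleCat.{u} Λ, Module.Finite Λ M → MemBracket Λ T n M}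

/-- The weak resolution dimension of `Λ` (Iyama): the least `n` such that there is a
finitely generated `M` so that every finitely generated `X` is a direct summand of some `Y`
admitting an exact sequence `0 → M_n → ⋯ → M_0 → Y → 0` with all `M_i ∈ add M`. -/
noncomputable def wResolDim : ℕ∞ :=
  sInf {c : ℕ∞ | ∃ (n : ℕ) (M : ModuleCat.{u} Λ), c = n ∧ Module.Finite Λ M ∧
    ∀ X : ModuleCat.{u} Λ, Module.Finite Λ X →
      ∃ Y : ModuleCat.{u} Λ, HasAddResolution Λ M n Y ∧ MemAdd Λ Y X}

/-- A module is indecomposable if it is nonzero and admits no nontrivial direct sum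
decomposition. -/
def IsIndecomposable (M : ModuleCat.{u} Λ) : Prop :=
  ¬ Subsingleton M ∧
    ∀ A B : ModuleCat.{u} Λ, Nonempty (M ≃ₗ[Λ] (A × B)) →
      Subsingleton A ∨ Subsingleton B

/-- `Λ` is representation-finite: there are only finitely many isomorphism classes of
finitely generated indecomposable modules. -/
def IsRepFinite : Prop :=
  ∃ (k : ℕ) (M : Fin k → ModuleCat.{u} Λ),
    ∀ X : ModuleCat.{u} Λ, Module.Finite Λ X → IsIndecomposable Λ X →
      ∃ i, Nonempty (X ≃ₗ[Λ] M i)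

/-- There is an exact sequence `0 → P_n → ⋯ → P_0 → M → 0` with all `P_i` projective. -/
def HasProjResolution : ℕ → ModuleCat.{u} Λ → Prop
  | 0, M => Module.Projective Λ M
  | n + 1, M => ∃ (W : ModuleCat.{u} Λ) (f : W →ₗ[Λ] M),
      Module.Projective Λ W ∧ Function.Surjective f ∧
      HasProjResolution n (ModuleCat.of Λ ↥(LinearMap.ker f))

/-- The (left) global dimension of `Λ`. -/
noncomputable def glDim : ℕ∞ :=
  sInf {c : ℕ∞ | ∃ n : ℕ, c = n ∧ ∀ M : ModuleCat.{u} Λ, HasProjResolution Λ n M}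

/-- The `n`-th power of the Jacobson radical of `Λ`. -/
def radPow : ℕ → Ideal Λ
  | 0 => ⊤
  | n + 1 => Ideal.span
      {z : Λ | ∃ x ∈ (⊥ : Ideal Λ).jacobson, ∃ y ∈ radPow n, z = x * y}

/-- The Loewy length of `Λ`: the least `n` with `(rad Λ)ⁿ = 0`. -/
noncomputable def loewyLength : ℕ∞ :=
  sInf {c : ℕ∞ | ∃ n : ℕ, c = n ∧ radPow Λ n = ⊥}

/-- `M` is a generator-cogenerator for `Λ`-mod: `add M` contains all finitely generated
projective modules and all finitely generated injective modules. -/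
def IsGeneratorCogenerator (M : ModuleCat.{u} Λ) : Prop :=
  (∀ P : ModuleCat.{u} Λ, Module.Finite Λ P → Module.Projective Λ P → MemAdd Λ M P) ∧
  (∀ I : ModuleCat.{u} Λ, Module.Finite Λ I → Module.Injective Λ I → MemAdd Λ M I)

open Classical in
/-- The representation dimension of `Λ` (Auslander). -/
noncomputable def repDim : ℕ∞ :=
  if IsSemisimpleRing Λ then 1 else
  sInf {c : ℕ∞ | ∃ M : ModuleCat.{u} Λ, Module.Finite Λ M ∧
    IsGeneratorCogenerator Λ M ∧ c = glDim (Module.End Λ M)}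

end Modules

end Paper
/-! ## Subalgebras, left idealized extensions, representation distance -/

namespace Paper

section Subalg

variable (R : Type u) [CommRing R]

/-- The underlying subset of the ambient algebra `Γ` corresponding to the Jacobson
radical of the subalgebra `A`. -/
def jacobsonCarrier {Γ : Type u} [Ring Γ] [Algebra R Γ] (A : Subalgebra R Γ) : Set Γ :=
  {z : Γ | ∃ h : z ∈ A, (⟨z, h⟩ : A) ∈ (⊥ : Ideal A).jacobson}

/-- `B` is a left idealized extension of `A`: `A ⊆ B` (with the same identity) and the
Jacobson radical `rad A` is a left ideal of `B`. -/
def IsLeftIdealizedExt {Γ : Type u} [Ring Γ] [Algebra R Γ] (A B : Subalgebra R Γ) : Prop :=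
  A ≤ B ∧ ∀ x ∈ B, ∀ z ∈ jacobsonCarrier R A, x * z ∈ jacobsonCarrier R A

/-- The left representation distance of `Λ`: the least `s` such that there is a chain of
subalgebras `Λ = Λ₀ ⊊ Λ₁ ⊊ ⋯ ⊊ Λ_s` (inside some artin algebra `Λ_s`) with `rad Λᵢ` a left
ideal of `Λᵢ₊₁` for all `i` and `Λ_s` representation-finite. -/
noncomputable def lrepDis (Λ : Type u) [Ring Λ] [Algebra R Λ] : ℕ∞ :=
  sInf {c : ℕ∞ | ∃ (s : ℕ) (Γ : Type u) (_ : Ring Γ) (_ : Algebra R Γ)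
    (_ : Module.Finite R Γ) (S : Fin (s + 1) → Subalgebra R Γ), c = s ∧
    Nonempty (Λ ≃ₐ[R] ↥(S 0)) ∧
    (∀ i : Fin s, S i.castSucc < S i.succ) ∧
    (∀ i : Fin s, IsLeftIdealizedExt R (S i.castSucc) (S i.succ)) ∧
    S (Fin.last s) = ⊤ ∧ IsRepFinite ↥(S (Fin.last s))}

end Subalg

end Paper
/-! ## `Hom_Λ(P,-)` and `P ⊗_Γ -` for `Γ = End_Λ(P)ᵒᵖ` -/

namespace Paper

section HomTensor

variable (Λ : Type u) [Ring Λ] (P : Type u) [AddCommGroup P] [Module Λ P]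

/-- `Hom_Λ(P, N)`, regarded as a left module over `Γ = End_Λ(P)ᵒᵖ` by precomposition. -/
def HomP (N : Type u) [AddCommGroup N] [Module Λ N] : Type u := P →ₗ[Λ] N

instance (N : Type u) [AddCommGroup N] [Module Λ N] : AddCommGroup (HomP Λ P N) :=
  inferInstanceAs (AddCommGroup (P →ₗ[Λ] N))

/-- Reinterpret an element of `HomP Λ P N` as a linear map. -/
def HomP.toLin {N : Type u} [AddCommGroup N] [Module Λ N] (f : HomP Λ P N) :
    P →ₗ[Λ] N := f

instance (N : Type u) [AddCommGroup N] [Module Λ N] :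
    SMul (Module.End Λ P)ᵐᵒᵖ (HomP Λ P N) :=
  ⟨fun g f => LinearMap.comp (f : P →ₗ[Λ] N) g.unop⟩

lemma homP_smul_def (N : Type u) [AddCommGroup N] [Module Λ N]
    (g : (Module.End Λ P)ᵐᵒᵖ) (f : HomP Λ P N) :
    g • f = LinearMap.comp (f : P →ₗ[Λ] N) g.unop := rfl

instance (N : Type u) [AddCommGroup N] [Module Λ N] :
    Module (Module.End Λ P)ᵐᵒᵖ (HomP Λ P N) where
  one_smul f := LinearMap.ext fun _ => rfl
  mul_smul g h f := LinearMap.ext fun _ => rfl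
  smul_zero g := LinearMap.ext fun _ => rfl
  smul_add g f₁ f₂ := LinearMap.ext fun _ => rfl
  add_smul g h f := LinearMap.ext fun p => map_add (HomP.toLin Λ P f) _ _
  zero_smul f := LinearMap.ext fun p => map_zero (HomP.toLin Λ P f)

variable (X : Type u) [AddCommGroup X] [Module (Module.End Λ P)ᵐᵒᵖ X]

/-- The defining relations of the tensor product `P ⊗_Γ X`, inside the free module
`X →₀ P`. -/
noncomputable def tensorRels : Submodule Λ (X →₀ P) :=
  Submodule.span Λ
    ({w | ∃ (x y : X) (p : P),
        w = Finsupp.single (x + y) p - Finsupp.single x p - Finsupp.single y p} ∪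
     {w | ∃ (γ : (Module.End Λ P)ᵐᵒᵖ) (x : X) (p : P),
        w = Finsupp.single (γ • x) p - Finsupp.single x (γ.unop p)})

/-- The tensor product `P ⊗_Γ X` over `Γ = End_Λ(P)ᵒᵖ`, as a left `Λ`-module. -/
def TensorPX : Type u := (X →₀ P) ⧸ tensorRels Λ P X

noncomputable instance : AddCommGroup (TensorPX Λ P X) :=
  inferInstanceAs (AddCommGroup ((X →₀ P) ⧸ tensorRels Λ P X))

noncomputable instance : Module Λ (TensorPX Λ P X) :=
  inferInstanceAs (Module Λ ((X →₀ P) ⧸ tensorRels Λ P X))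

end HomTensor

end Paper
/-! ## Dimension of triangulated categories and the bounded derived category -/

namespace Paper

section Tri

open CategoryTheory.Pretriangulated CategoryTheory.Limits

variable (C : Type v) [Category.{w} C]

/-- `X` is a retract (direct summand) of `Y`. -/
def IsRetractOf (X Y : C) : Prop := ∃ (s : X ⟶ Y) (r : Y ⟶ X), s ≫ r = 𝟙 X

variable [Preadditive C] [HasShift C ℤ]

/-- Membership in `⟨I⟩₁`: the closure of `I` under shifts, finite direct sums and
direct summands, i.e. `add {X[i] | X ∈ I, i ∈ ℤ}`. -/
inductive MemThickOne (I : Set C) : C → Prop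
  | of (X : C) : X ∈ I → MemThickOne I X
  | zero (X : C) : IsZero X → MemThickOne I X
  | shift (X : C) (n : ℤ) : MemThickOne I X → MemThickOne I (X⟦n⟧)
  | sum (X Y Z : C) : MemThickOne I X → MemThickOne I Y →
      (∃ (iX : X ⟶ Z) (iY : Y ⟶ Z) (pX : Z ⟶ X) (pY : Z ⟶ Y),
        iX ≫ pX = 𝟙 X ∧ iY ≫ pY = 𝟙 Y ∧ pX ≫ iX + pY ≫ iY = 𝟙 Z) → MemThickOne I Z
  | retract (X Y : C) : MemThickOne I Y → IsRetractOf C X Y → MemThickOne I X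

variable [HasZeroObject C] [∀ n : ℤ, (shiftFunctor C n).Additive] [Pretriangulated C]

/-- `I₁ * I₂`: objects `X` sitting in a distinguished triangle `X₁ → X → X₂ → X₁[1]`
with `X₁ ∈ I₁` and `X₂ ∈ I₂`. -/
def starSet (I₁ I₂ : Set C) : Set C :=
  {X | ∃ (X₁ X₂ : C) (_ : X₁ ∈ I₁) (_ : X₂ ∈ I₂) (f : X₁ ⟶ X) (g : X ⟶ X₂)
        (h : X₂ ⟶ X₁⟦(1 : ℤ)⟧), Triangle.mk f g h ∈ distTriang C}

/-- `⟨I⟩_n`: `⟨I⟩_0 = 0`, `⟨I⟩_1` as above, and `⟨I⟩_{n+1} = ⟨⟨I⟩_n * ⟨I⟩_1⟩_1`. -/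
def thickLevel (I : Set C) : ℕ → Set C
  | 0 => {X | IsZero X}
  | 1 => setOf (MemThickOne C I)
  | n + 2 => setOf (MemThickOne C
      (starSet C (thickLevel I (n + 1)) (setOf (MemThickOne C I))))

/-- The Rouquier dimension of the triangulated category `C`. -/
noncomputable def triDim : ℕ∞ :=
  sInf {c : ℕ∞ | ∃ (n : ℕ) (T : C), c = n ∧ ∀ X : C, X ∈ thickLevel C {T} (n + 1)}

/-- The Rouquier dimension of a subcategory `S` of the triangulated category `C`. -/
noncomputable def triDimSub (S : Set C) : ℕ∞ :=
  sInf {c : ℕ∞ | ∃ (n : ℕ) (T : C), c = n ∧ S ⊆ thickLevel C {T} (n + 1)}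

end Tri

section Derived

open CategoryTheory.Limits

variable (Λ : Type u) [Ring Λ]

/-- An object of the (unbounded) derived category of `Λ`-modules lies in the bounded
derived category `D^b(Λ-mod)` of finitely generated modules iff its homology is bounded
and finitely generated in each degree. -/
def IsDbObject [HasDerivedCategory.{w} (ModuleCat.{u} Λ)]
    (Z : DerivedCategory (ModuleCat.{u} Λ)) : Prop :=
  (∃ a b : ℤ, ∀ n : ℤ, (n < a ∨ b < n) →
      IsZero ((DerivedCategory.homologyFunctor (ModuleCat.{u} Λ) n).obj Z)) ∧
  ∀ n : ℤ, Module.Finite Λ ((DerivedCategory.homologyFunctor (ModuleCat.{u} Λ) n).obj Z)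

/-- The derived dimension of `Λ`: the Rouquier dimension of the bounded derived category
`D^b(Λ-mod)`, realized as the full triangulated subcategory of complexes with bounded,
finitely generated homology inside the derived category of all `Λ`-modules. -/
noncomputable def derivedDim : ℕ∞ :=
  letI := HasDerivedCategory.standard (ModuleCat.{u} Λ)
  sInf {c : ℕ∞ | ∃ (n : ℕ) (T : DerivedCategory (ModuleCat.{u} Λ)), c = n ∧
    IsDbObject Λ T ∧
    ∀ Z : DerivedCategory (ModuleCat.{u} Λ), IsDbObject Λ Z →
      Z ∈ thickLevel (DerivedCategory (ModuleCat.{u} Λ)) {T} (n + 1)}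

/-- The Rouquier dimension of the subcategory `Λ-mod ⊆ D^b(Λ-mod)` (modules viewed as
complexes concentrated in degree `0`). -/
noncomputable def derivedDimOfMod : ℕ∞ :=
  letI := HasDerivedCategory.standard (ModuleCat.{u} Λ)
  sInf {c : ℕ∞ | ∃ (n : ℕ) (T : DerivedCategory (ModuleCat.{u} Λ)), c = n ∧
    IsDbObject Λ T ∧
    ∀ M : ModuleCat.{u} Λ, Module.Finite Λ M →
      (DerivedCategory.singleFunctor (ModuleCat.{u} Λ) 0).obj M ∈
        thickLevel (DerivedCategory (ModuleCat.{u} Λ)) {T} (n + 1)}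

end Derived

end Paper
/-! ## Path algebras of quivers with relations, by generators and relations -/

namespace Paper

section PathAlg

/-- Generators of the path algebra of a quiver: one generator for each vertex
(the corresponding primitive idempotent) and one for each arrow. -/
inductive QGen (V E : Type u) : Type u
  | vertex : V → QGen V E
  | arrow : E → QGen V E

variable (K : Type u) [CommRing K] (V E : Type u)

/-- The generator of the free algebra corresponding to a vertex. -/
def qv (i : V) : FreeAlgebra K (QGen V E) := FreeAlgebra.ι K (QGen.vertex i)

/-- The generator of the free algebra corresponding to an arrow. -/
def qa (a : E) : FreeAlgebra K (QGen V E) := FreeAlgebra.ι K (QGen.arrow a)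

variable [Fintype V] [DecidableEq V] (src tgt : E → V)
  (rels : Set (FreeAlgebra K (QGen V E)))

/-- The relations presenting `KQ/I`: the `e_i` are orthogonal idempotents summing to `1`,
`e_v * a = a` iff `v` is the source of `a` (and `0` otherwise), `a * e_v = a` iff `v` is
the target of `a` (and `0` otherwise) — paths being written from left to right — together
with the relations `r = 0` for `r ∈ rels`. -/
inductive PathRel : FreeAlgebra K (QGen V E) → FreeAlgebra K (QGen V E) → Prop
  | vertexMul (i j : V) :
      PathRel (qv K V E i * qv K V E j) (if i = j then qv K V E i else 0)
  | sumOne : PathRel (∑ i : V, qv K V E i) 1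
  | srcMul (a : E) (v : V) :
      PathRel (qv K V E v * qa K V E a) (if v = src a then qa K V E a else 0)
  | mulTgt (a : E) (v : V) :
      PathRel (qa K V E a * qv K V E v) (if v = tgt a then qa K V E a else 0)
  | ofRel (r : FreeAlgebra K (QGen V E)) : r ∈ rels → PathRel r 0

/-- The path algebra `KQ/I` of the quiver with vertex set `V`, arrow set `E` and
relations `rels`. -/
abbrev PathAlgebra : Type u := RingQuot (PathRel K V E src tgt rels)

end PathAlg

end Paper

/-! A short exact sequence `0 → U → E → V → 0` of modules becomes a distinguished triangle
`U → E → V → U[1]` in the derived category. Hence, by induction on `n`, every module of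
`[T]_{n+1}` lies in Mathlib's `triangEnvelopeIter {T} n`, whose extension steps put an object
of `⟨T⟩₁` on the left of the triangle. The levels `⟨T⟩_{n+1}` put it on the right instead;
the octahedral axiom (associativity of extension products, `triangEnvelopeIter_succ'`)
shows that the first filtration is contained in the second. -/

namespace Paper

open CategoryTheory.Limits CategoryTheory.Pretriangulated ObjectProperty

section ThickLevel

open ZeroObject

variable {C : Type v} [Category.{w} C] [Preadditive C] [HasShift C ℤ] {I : Set C}

instance : IsStableUnderRetracts (MemThickOne C I) where
  of_retract h hY := .retract _ _ hY ⟨h.i, h.r, h.retract⟩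

instance (a : ℤ) : IsStableUnderShiftBy (MemThickOne C I) a where
  le_shift X hX := .shift X a hX

instance : IsStableUnderShift (MemThickOne C I) ℤ where

lemma MemThickOne.biprod {X Y : C} [HasBinaryBiproduct X Y] (hX : MemThickOne C I X)
    (hY : MemThickOne C I Y) : MemThickOne C I (X ⊞ Y) :=
  .sum X Y _ hX hY ⟨biprod.inl, biprod.inr, biprod.fst, biprod.snd, by simp, by simp,
    biprod.total⟩

instance [HasBinaryBiproducts C] : IsClosedUnderBinaryProducts (MemThickOne C I) :=
  IsClosedUnderLimitsOfShape.mk' fun _ ⟨F, hF⟩ =>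
    prop_of_iso (MemThickOne C I)
      (biprod.isoProd _ _ ≪≫ (HasLimit.isoOfNatIso (diagramIsoPair F)).symm)
      ((hF _).biprod (hF _))

instance [HasZeroObject C] : ContainsZero (MemThickOne C I) where
  exists_zero := ⟨0, isZero_zero C, .zero _ (isZero_zero C)⟩

variable [HasZeroObject C] [∀ n : ℤ, (shiftFunctor C n).Additive] [Pretriangulated C]

lemma triangEnvelopeIter_zero_le_memThickOne (I : Set C) :
    triangEnvelopeIter (· ∈ I) 0 ≤ MemThickOne C I := by
  rw [triangEnvelopeIter_zero, retractClosure_le_iff, binaryProductsClosure_le_iff,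
    shiftClosure_le_iff]
  exact fun X hX => .of X hX

lemma triangEnvelopeIter_le_thickLevel [IsTriangulated C] (I : Set C) (n : ℕ) :
    triangEnvelopeIter (· ∈ I) n ≤ (· ∈ thickLevel C I (n + 1)) := by
  induction n with
  | zero => exact triangEnvelopeIter_zero_le_memThickOne I
  | succ n ih =>
    show _ ≤ MemThickOne C (starSet C (thickLevel C I (n + 1)) {X | MemThickOne C I X})
    rw [triangEnvelopeIter_succ', ← triangEnvelopeIter_zero, retractClosure_le_iff]
    rintro X ⟨Y, Z, f, g, h, hT, hY, hZ⟩
    exact .of X ⟨Y, Z, ih Y hY, triangEnvelopeIter_zero_le_memThickOne I Z hZ, f, g, h, hT⟩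

end ThickLevel

open DerivedCategory

section Modules

variable {Λ : Type u} [Ring Λ] [HasDerivedCategory.{w} (ModuleCat.{u} Λ)]

noncomputable def singleFunctorObjRetract {M N : ModuleCat.{u} Λ} (s : M →ₗ[Λ] N)
    (r : N →ₗ[Λ] M) (hrs : r.comp s = LinearMap.id) :
    Retract ((singleFunctor _ 0).obj M) ((singleFunctor _ 0).obj N) :=
  Retract.map ⟨ModuleCat.ofHom s, ModuleCat.ofHom r, ModuleCat.hom_ext hrs⟩ _

-- `k + 1` copies: a binary products closure need not contain `0`.
lemma singleFunctor_obj_pi_mem_binaryProductsClosure (T : ModuleCat.{u} Λ) (k : ℕ) :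
    (shiftClosure (· ∈ ({(singleFunctor _ 0).obj T} : Set _)) ℤ).binaryProductsClosure
      ((singleFunctor _ 0).obj (ModuleCat.of Λ (Fin (k + 1) → T))) := by
  induction k with
  | zero =>
    refine prop_of_iso _ ((singleFunctor _ 0).mapIso
      (LinearEquiv.funUnique (Fin 1) Λ T).toModuleIso.symm) ?_
    exact le_limitsClosure _ _ _ (le_shiftClosure _ _ rfl)
  | succ k ih =>
    refine prop_of_iso _ ((singleFunctor _ 0).mapIso
      ((Fin.consLinearEquiv Λ fun _ => T).toModuleIso.symm ≪≫
        (ModuleCat.biprodIsoProd T (ModuleCat.of Λ (Fin (k + 1) → T))).symm ≪≫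
        biprod.isoProd _ _) ≪≫ PreservesLimitPair.iso _ _ _).symm ?_
    exact prop_prod _ _ _ (le_limitsClosure _ _ _ (le_shiftClosure _ _ rfl)) ih

lemma singleFunctor_obj_mem_triangEnvelopeIter_zero_of_memAdd {T M : ModuleCat.{u} Λ}
    (h : MemAdd Λ T M) :
    triangEnvelopeIter (· ∈ ({(singleFunctor _ 0).obj T} : Set _))
      0 ((singleFunctor _ 0).obj M) := by
  obtain ⟨_ | k, s, r, hrs⟩ := h
  · have : Subsingleton M := (LinearMap.injective_of_comp_eq_id s r hrs).subsingleton
    refine prop_of_retract _ ⟨0, 0, ?_⟩ (le_triangEnvelopeIter _ 0 _ rfl)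
    exact (Functor.map_isZero _ (ModuleCat.isZero_of_subsingleton M)).eq_of_src _ _
  · rw [triangEnvelopeIter_zero]
    exact prop_retractClosure (singleFunctor_obj_pi_mem_binaryProductsClosure T k)
      (singleFunctorObjRetract s r hrs)

lemma singleFunctor_obj_mem_triangEnvelopeIter_of_memBracket {T : ModuleCat.{u} Λ} {n : ℕ}
    {M : ModuleCat.{u} Λ} (h : MemBracket Λ T n M) :
    triangEnvelopeIter (· ∈ ({(singleFunctor _ 0).obj T} : Set _))
      n ((singleFunctor _ 0).obj M) := by
  induction n generalizing M with
  | zero => exact singleFunctor_obj_mem_triangEnvelopeIter_zero_of_memAdd h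
  | succ n ih =>
    obtain ⟨U, E, V, f, g, hf, hg, hfg, hU, hV, s, r, hrs⟩ := h
    let S : ShortComplex (ModuleCat.{u} Λ) := .mk (ModuleCat.ofHom f) (ModuleCat.ofHom g)
      (ModuleCat.hom_ext (LinearMap.exact_iff.2 hfg.symm).linearMap_comp_eq_zero)
    have hS : S.ShortExact :=
      { exact := (S.moduleCat_exact_iff_range_eq_ker).2 hfg
        mono_f := (ModuleCat.mono_iff_injective _).2 hf
        epi_g := (ModuleCat.epi_iff_surjective _).2 hg }
    rw [triangEnvelopeIter_succ, ← triangEnvelopeIter_zero]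
    refine prop_retractClosure ?_ (singleFunctorObjRetract s r hrs)
    exact ⟨_, _, _, _, _, hS.singleTriangle_distinguished,
      singleFunctor_obj_mem_triangEnvelopeIter_zero_of_memAdd hU, ih hV⟩

lemma isDbObject_singleFunctor_obj (T : ModuleCat.{u} Λ) [Module.Finite Λ T] :
    IsDbObject Λ ((singleFunctor _ 0).obj T) := by
  let e (n : ℤ) : (homologyFunctor _ n).obj ((singleFunctor _ 0).obj T) ≅
      ((HomologicalComplex.single _ (ComplexShape.up ℤ) 0).obj T).homology n :=
    (homologyFunctorFactors _ n).app _
  have isZero (n : ℤ) (hn : n ≠ 0) :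
      IsZero ((homologyFunctor _ n).obj ((singleFunctor _ 0).obj T)) :=
    (HomologicalComplex.isZero_single_obj_homology _ _ T n hn).of_iso (e n)
  refine ⟨⟨0, 0, fun n hn => isZero n (by omega)⟩, fun n => ?_⟩
  by_cases hn : n = 0
  · subst hn
    exact Module.Finite.equiv
      (e 0 ≪≫ HomologicalComplex.singleObjHomologySelfIso _ _ T).toLinearEquiv.symm
  · have := ModuleCat.subsingleton_of_isZero (isZero n hn)
    infer_instance

end Modules

end Paper

open Paper in
theorem derivedDimOfMod_le_extDim_general
    (Λ : Type u) [Ring Λ] :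
    derivedDimOfMod Λ ≤ extDim Λ := by
  refine le_sInf fun c ⟨n, T, hc, hT, hbracket⟩ => hc ▸ ?_
  let := HasDerivedCategory.standard (ModuleCat.{u} Λ)
  exact sInf_le ⟨n, (DerivedCategory.singleFunctor _ 0).obj T, rfl,
    isDbObject_singleFunctor_obj T, fun M hM => triangEnvelopeIter_le_thickLevel _ n _
      (singleFunctor_obj_mem_triangEnvelopeIter_of_memBracket (hbracket M hM))⟩

open Paper in
/-- **Lemma 2.3(2).** For any artin algebra `Λ`, the dimension of the subcategory
`Λ-mod` inside `D^b(Λ-mod)` is at most `ext.dim Λ`. -/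
theorem derivedDimOfMod_le_extDim
    (R : Type u) [CommRing R] [IsArtinianRing R]
    (Λ : Type u) [Ring Λ] [Algebra R Λ] [Module.Finite R Λ] :
    derivedDimOfMod Λ ≤ extDim Λ :=
  derivedDimOfMod_le_extDim_general Λ
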